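/- Let M be a free abelian group of finite rank, V and W subgroups of M, and φ : V → W a group isomorphism. For an element x of M, the following are equivalent: (i) there exists a positive integer p such that for every k ∈ ℕ the k-th iterate of φ^{-1} is defined at p·x (i.e. p·x ∈ W_k where W_k = { w ∈ W : φ^{-j}(w) ∈ W for all 0 ≤ j < k }); (ii) there exists a ℚ-subspace D_x of D_φ containing the image of x, with φ̃(D_x) = D_x, such that the minimal polynomial of the restriction of φ̃^{-1} to D_x is a monic polynomial with integer coefficients. -/

import Mathlib

/-!
Setting: `M = ℤ^n` is a free abelian group of finite rank, `V, W` are subgroups of `M`,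
and `φ : V ≃+ W` is a group isomorphism.  Inside `M ⊗ ℚ = ℚ^n`, a subgroup `U` of `M`
is identified with the `ℚ`-subspace `U ⊗ ℚ` spanned by its image, and `φ_ℚ` denotes the
unique `ℚ`-linear extension of `φ` to `V ⊗ ℚ`.
-/

/-- The canonical embedding of `ℤ^n` into `ℚ^n` (i.e. `M → M ⊗ ℚ`). -/
def embQ (n : ℕ) (x : Fin n → ℤ) : Fin n → ℚ := fun i => (x i : ℚ)

/-- `U ⊗ ℚ`, the `ℚ`-subspace of `ℚ^n` spanned by the image of a subgroup `U` of `ℤ^n`. -/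
def qSpan (n : ℕ) (U : AddSubgroup (Fin n → ℤ)) : Submodule ℚ (Fin n → ℚ) :=
  Submodule.span ℚ (embQ n '' (U : Set (Fin n → ℤ)))

/-- `RelQ V W φ x y` expresses that `x ∈ V ⊗ ℚ` and `φ_ℚ (x) = y`, where `φ_ℚ` is the
unique `ℚ`-linear extension of `φ : V ≃+ W`: there is a nonzero integer `p` clearing the
denominators of `x`, with `p • x ∈ V` and `φ (p • x) = p • y`. -/
def RelQ {n : ℕ} (V W : AddSubgroup (Fin n → ℤ)) (φ : V ≃+ W)
    (x y : Fin n → ℚ) : Prop :=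
  ∃ p : ℤ, p ≠ 0 ∧ ∃ v : V, embQ n (v : Fin n → ℤ) = p • x ∧
    embQ n ((φ v : W) : Fin n → ℤ) = p • y

/-- `D_φ`: the set of `x ∈ (V ∩ W) ⊗ ℚ` admitting a full backward orbit
`(x_k)_{k ≥ 0}` under `φ_ℚ` inside `(V ∩ W) ⊗ ℚ`, i.e. `x_0 = x` and
`φ_ℚ (x_{k+1}) = x_k` for all `k`. -/
def DSet {n : ℕ} (V W : AddSubgroup (Fin n → ℤ)) (φ : V ≃+ W) : Set (Fin n → ℚ) :=
  {x | ∃ xs : ℕ → (Fin n → ℚ), xs 0 = x ∧ (∀ k, xs k ∈ qSpan n (V ⊓ W)) ∧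
      ∀ k, RelQ V W φ (xs (k + 1)) (xs k)}

/-- `IntRel V W φ v w`: `v ∈ V` and `φ (v) = w` (as elements of `M = ℤ^n`). -/
def IntRel {n : ℕ} (V W : AddSubgroup (Fin n → ℤ)) (φ : V ≃+ W)
    (v w : Fin n → ℤ) : Prop :=
  ∃ hv : v ∈ V, ((φ ⟨v, hv⟩ : W) : Fin n → ℤ) = w

/-- `IntRelIter V W φ k v w`: the `k`-th iterate of `φ` is defined at `v` (i.e. `v ∈ V_k`,
that is `φ^j (v) ∈ V` for all `0 ≤ j < k`) and `φ^k (v) = w`.  In particular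
`V_k = {v | ∃ w, IntRelIter V W φ k v w}` and `W_k = φ^k (V_k) = {w | ∃ v, IntRelIter V W φ k v w}`. -/
def IntRelIter {n : ℕ} (V W : AddSubgroup (Fin n → ℤ)) (φ : V ≃+ W) :
    ℕ → (Fin n → ℤ) → (Fin n → ℤ) → Prop
  | 0, v, w => v = w
  | (k + 1), v, w => ∃ u, IntRel V W φ v u ∧ IntRelIter V W φ k u w

/-!
If `p • x` has a full backward orbit `w₀ = p • x, w₁, w₂, …` under `φ`, the lattice `Λ` spanned
by `w₁, w₂, …` lies in `V ∩ W` and is mapped into itself by `φ⁻¹`. As `Λ` is finitely generated,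
`φ⁻¹|_Λ` is integral over `ℤ` (Cayley–Hamilton), so its extension to `D = Λ ⊗ ℚ` is an injective,
hence bijective, endomorphism whose minimal polynomial lies in `ℤ[X]` by Gauss's lemma; and
`x ∈ D` because `φ_ℚ (w₁) = w₀`.

Conversely, if `φ̃⁻¹` is integral over `ℤ` on `D ∋ x`, the orbit `(φ̃⁻ᵏ x)ₖ` lies in a finitely
generated `ℤ`-submodule of `(V ∩ W) ⊗ ℚ`. One denominator `p` then clears all of it, and the
integral points `p • φ̃⁻ᵏ x` form a backward orbit of `p • x`.
-/

open Polynomial nonZeroDivisors Submodule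

theorem isIntegral_iff_exists_monic_map_eq_minpoly {R K A : Type*} [CommRing R] [IsDomain R]
    [IsIntegrallyClosed R] [Field K] [Algebra R K] [IsFractionRing R K] [Ring A] [Algebra K A]
    [Algebra R A] [IsScalarTower R K A] {a : A} :
    IsIntegral R a ↔ ∃ P : R[X], P.Monic ∧ P.map (algebraMap R K) = minpoly K a := by
  refine ⟨fun ha => ?_, fun ⟨P, hPm, hP⟩ => ⟨P, hPm, ?_⟩⟩
  · have hdvd : minpoly K a ∣ (minpoly R a).map (algebraMap R K) :=
      minpoly.dvd K a (by rw [aeval_map_algebraMap, minpoly.aeval])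
    obtain ⟨P, hP⟩ := IsIntegrallyClosed.eq_map_mul_C_of_dvd K (minpoly.monic ha) hdvd
    have hK : (minpoly K a).Monic := minpoly.monic ha.tower_top
    rw [hK.leadingCoeff, C_1, mul_one] at hP
    exact ⟨P, monic_of_injective (IsFractionRing.injective R K) (hP ▸ hK), hP⟩
  · rw [← aeval_def, ← aeval_map_algebraMap K, hP, minpoly.aeval]

theorem IsIntegral.exists_fg_orbit {R A M : Type*} [CommRing R] [Ring A] [Algebra R A]
    [AddCommMonoid M] [Module A M] [Module R M] [IsScalarTower R A M] {a : A}
    (ha : IsIntegral R a) (m : M) : ∃ N : Submodule R M, N.FG ∧ ∀ k : ℕ, (a ^ k) • m ∈ N :=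
  ⟨(Subalgebra.toSubmodule (Algebra.adjoin R {a})).map
      ((LinearMap.toSpanSingleton A M m).restrictScalars R),
    ha.fg_adjoin_singleton.map _, fun k =>
      ⟨a ^ k, pow_mem (Algebra.self_mem_adjoin_singleton R a) k, rfl⟩⟩

theorem Submodule.FG.exists_smul_mem {R M : Type*} [CommSemiring R] [AddCommMonoid M]
    [Module R M] {S : Submonoid R} {L N : Submodule R M} (hN : N.FG)
    (h : ∀ y ∈ N, ∃ s ∈ S, s • y ∈ L) : ∃ s ∈ S, ∀ y ∈ N, s • y ∈ L := by
  classical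
  obtain ⟨t, rfl⟩ := hN
  choose! d hdS hd using fun y (hy : y ∈ t) => h y (subset_span hy)
  refine ⟨∏ y ∈ t, d y, prod_mem fun y hy => hdS y hy, fun y hy => ?_⟩
  suffices span R t ≤ L.comap ((∏ y ∈ t, d y) • LinearMap.id) from this hy
  refine span_le.2 fun y hy => ?_
  rw [SetLike.mem_coe, mem_comap, LinearMap.smul_apply, LinearMap.id_apply,
    ← Finset.prod_erase_mul _ _ hy, mul_smul]
  exact L.smul_mem _ (hd y hy)

theorem LinearMap.range_le_of_forall_generator_mem {R M N : Type*} [Semiring R] [AddCommMonoid M]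
    [Module R M] [AddCommMonoid N] [Module R N] {s : Set M} (g : span R s →ₗ[R] N)
    {L : Submodule R N} (h : ∀ x (hx : x ∈ s), g ⟨x, subset_span hx⟩ ∈ L) :
    LinearMap.range g ≤ L := by
  rw [LinearMap.range_eq_map, ← span_span_coe_preimage, map_span, span_le]
  rintro _ ⟨⟨x, _⟩, hx, rfl⟩
  exact h x hx

namespace IsLocalizedModule

variable {R : Type*} [CommRing R] (S : Submonoid R) {M M' : Type*} [AddCommGroup M]
  [AddCommGroup M'] [Module R M] [Module R M'] (f : M →ₗ[R] M') [IsLocalizedModule S f]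
  (Rₛ : Type*) [CommRing Rₛ] [Algebra R Rₛ] [Module Rₛ M'] [IsScalarTower R Rₛ M']
  [IsLocalization S Rₛ]

noncomputable def mapEndAlgHom : Module.End R M →ₐ[R] Module.End Rₛ M' :=
  AlgHom.ofLinearMap (mapExtendScalars S f f Rₛ)
    (by
      apply LinearMap.restrictScalars_injective R
      apply IsLocalizedModule.linearMap_ext S f f
      ext; simp)
    (fun g h => by
      apply LinearMap.restrictScalars_injective R
      apply IsLocalizedModule.linearMap_ext S f f
      ext; simp)

theorem isIntegral_mapExtendScalars [Module.Finite R M] (g : Module.End R M) :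
    IsIntegral R (mapExtendScalars S f f Rₛ g) :=
  (Algebra.IsIntegral.isIntegral g).map (mapEndAlgHom S f Rₛ)

end IsLocalizedModule

/-- Through `embQ`, `ℚⁿ` is the localization of `ℤⁿ` at `ℤ⁰`; this lets `U ⊗ ℚ` be handled as
`Submodule.localized'` of `U` (see `qSpan_eq_localized'`). -/
def embL (n : ℕ) : (Fin n → ℤ) →ₗ[ℤ] (Fin n → ℚ) :=
  LinearMap.pi fun i => Algebra.linearMap ℤ ℚ ∘ₗ LinearMap.proj i

instance (n : ℕ) : IsLocalizedModule ℤ⁰ (embL n) := by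
  unfold embL; infer_instance

section

variable {n : ℕ} {V W : AddSubgroup (Fin n → ℤ)}

theorem coe_embL : ⇑(embL n) = embQ n := rfl

theorem embQ_injective : Function.Injective (embQ n) :=
  fun _ _ h => funext fun i => by simpa [embQ] using congrFun h i

theorem embQ_zsmul (p : ℤ) (u : Fin n → ℤ) : embQ n (p • u) = p • embQ n u :=
  (embL n).map_smul p u

theorem qSpan_eq_localized' (U : AddSubgroup (Fin n → ℤ)) :
    qSpan n U = U.toIntSubmodule.localized' ℚ ℤ⁰ (embL n) := by
  rw [localized'_eq_span]; rfl

theorem localized'_le_qSpan {Λ : Submodule ℤ (Fin n → ℤ)} {U : AddSubgroup (Fin n → ℤ)}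
    (hΛ : Λ ≤ U.toIntSubmodule) : Λ.localized' ℚ ℤ⁰ (embL n) ≤ qSpan n U := by
  rw [qSpan_eq_localized', localized'_eq_span, localized'_eq_span]
  exact span_mono (Set.image_mono hΛ)

theorem exists_pos_zsmul_mem_of_mem_qSpan {U : AddSubgroup (Fin n → ℤ)} {z : Fin n → ℚ}
    (hz : z ∈ qSpan n U) : ∃ q : ℤ, 0 < q ∧ ∃ u ∈ U, embQ n u = q • z := by
  rw [qSpan_eq_localized'] at hz
  obtain ⟨u, hu, s, rfl⟩ := hz
  refine ⟨s * s, mul_self_pos.2 (nonZeroDivisors.coe_ne_zero s), (s : ℤ) • u,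
    zsmul_mem hu s, ?_⟩
  rw [embQ_zsmul, mul_smul, ← coe_embL, ← IsLocalizedModule.mk'_cancel' (embL n) u s,
    Submonoid.smul_def]

def symmOn (φ : V ≃+ W) (Λ : Submodule ℤ (Fin n → ℤ)) (hΛ : Λ ≤ W.toIntSubmodule) :
    Λ →ₗ[ℤ] Fin n → ℤ :=
  AddMonoidHom.toIntLinearMap
    { toFun := fun u => φ.symm ⟨u, hΛ u.2⟩
      map_zero' := by simp
      map_add' := fun a b => by
        rw [← AddSubgroup.coe_add, ← map_add]; rfl }

variable {φ : V ≃+ W}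

theorem IntRel.mem_right {v w : Fin n → ℤ} (h : IntRel V W φ v w) : w ∈ W := by
  obtain ⟨hv, rfl⟩ := h
  exact (φ ⟨v, hv⟩).2

theorem IntRel.left_unique {v v' w : Fin n → ℤ} (h : IntRel V W φ v w)
    (h' : IntRel V W φ v' w) : v = v' := by
  obtain ⟨hv, hφv⟩ := h
  obtain ⟨hv', rfl⟩ := h'
  exact congrArg Subtype.val (φ.injective (Subtype.ext hφv))

theorem IntRel.right_unique {v w w' : Fin n → ℤ} (h : IntRel V W φ v w)
    (h' : IntRel V W φ v w') : w = w' := by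
  obtain ⟨hv, rfl⟩ := h
  obtain ⟨hv', rfl⟩ := h'
  rfl

theorem IntRel.relQ {v w : Fin n → ℤ} (h : IntRel V W φ v w) :
    RelQ V W φ (embQ n v) (embQ n w) := by
  obtain ⟨hv, rfl⟩ := h
  exact ⟨1, one_ne_zero, ⟨v, hv⟩, (one_smul ℤ _).symm, (one_smul ℤ _).symm⟩

theorem RelQ.of_intRel {p : ℤ} (hp : p ≠ 0) {v w : Fin n → ℤ} {x y : Fin n → ℚ}
    (h : IntRel V W φ v w) (hvx : embQ n v = p • x) (hwy : embQ n w = p • y) :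
    RelQ V W φ x y := by
  obtain ⟨hv, rfl⟩ := h
  exact ⟨p, hp, ⟨v, hv⟩, hvx, hwy⟩

theorem RelQ.zsmul {x y : Fin n → ℚ} (h : RelQ V W φ x y) (p : ℤ) :
    RelQ V W φ (p • x) (p • y) := by
  obtain ⟨q, hq, v, hvx, hvy⟩ := h
  refine ⟨q, hq, p • v, ?_, ?_⟩
  · rw [AddSubgroupClass.coe_zsmul, embQ_zsmul, hvx, smul_comm]
  · rw [map_zsmul, AddSubgroupClass.coe_zsmul, embQ_zsmul, hvy, smul_comm]

theorem RelQ.right_unique {x y y' : Fin n → ℚ} (h : RelQ V W φ x y) (h' : RelQ V W φ x y') :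
    y = y' := by
  obtain ⟨p, hp, v, hvx, hvy⟩ := h
  obtain ⟨q, hq, v', hv'x, hv'y⟩ := h'
  have hv : q • v = p • v' := Subtype.ext <| embQ_injective <| by
    rw [AddSubgroupClass.coe_zsmul, AddSubgroupClass.coe_zsmul, embQ_zsmul, embQ_zsmul, hvx,
      hv'x, smul_comm]
  have hφv := congrArg (fun t => embQ n ((φ t : W) : Fin n → ℤ)) hv
  simp only [map_zsmul, AddSubgroupClass.coe_zsmul, embQ_zsmul, hvy, hv'y, smul_smul] at hφv
  rw [mul_comm] at hφv
  exact smul_right_injective _ (mul_ne_zero hp hq) hφv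

theorem RelQ.intRel {x y : Fin n → ℚ} (h : RelQ V W φ x y) {p : ℤ} {v w : Fin n → ℤ}
    (hv : v ∈ V) (hvx : embQ n v = p • x) (hwy : embQ n w = p • y) : IntRel V W φ v w := by
  refine ⟨hv, embQ_injective ?_⟩
  rw [hwy]
  exact (IntRel.relQ ⟨hv, rfl⟩).right_unique (hvx ▸ h.zsmul p)

theorem IntRelIter.left_unique :
    ∀ {k : ℕ} {v v' t : Fin n → ℤ}, IntRelIter V W φ k v t → IntRelIter V W φ k v' t → v = v'
  | 0, _, _, _, h, h' => h.trans h'.symm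
  | _ + 1, _, _, _, ⟨_, hu, h⟩, ⟨_, hu', h'⟩ => hu.left_unique (IntRelIter.left_unique h h' ▸ hu')

theorem intRelIter_of_chain {w : ℕ → Fin n → ℤ} (hw : ∀ k, IntRel V W φ (w (k + 1)) (w k)) :
    ∀ k, IntRelIter V W φ k (w k) (w 0)
  | 0 => rfl
  | k + 1 => ⟨w k, hw k, intRelIter_of_chain hw k⟩

theorem forall_exists_intRelIter_iff {y : Fin n → ℤ} :
    (∀ k, ∃ v, IntRelIter V W φ k v y) ↔
      ∃ w : ℕ → Fin n → ℤ, w 0 = y ∧ ∀ k, IntRel V W φ (w (k + 1)) (w k) := by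
  constructor
  · intro h
    choose w hw using h
    refine ⟨w, hw 0, fun k => ?_⟩
    obtain ⟨u, hu, hrest⟩ := hw (k + 1)
    rwa [hrest.left_unique (hw k)] at hu
  · rintro ⟨w, rfl, hw⟩ k
    exact ⟨w k, intRelIter_of_chain hw k⟩

theorem dSet_subset_qSpan : DSet V W φ ⊆ qSpan n (V ⊓ W) := by
  rintro _ ⟨xs, rfl, hxs, -⟩
  exact hxs 0

theorem subset_dSet_of_relQ {D : Submodule ℚ (Fin n → ℚ)} (hD : D ≤ qSpan n (V ⊓ W))
    (e : D ≃ₗ[ℚ] D) (he : ∀ z : D, RelQ V W φ z (e z)) : (D : Set (Fin n → ℚ)) ⊆ DSet V W φ := by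
  intro z hz
  refine ⟨fun k => (e.symm^[k] ⟨z, hz⟩ : D), rfl, fun k => hD (Subtype.prop _), fun k => ?_⟩
  simpa [Function.iterate_succ_apply'] using he (e.symm^[k + 1] ⟨z, hz⟩)

theorem exists_linearEquiv_relQ_of_intRel {Λ : Submodule ℤ (Fin n → ℤ)} (ψ : Λ →ₗ[ℤ] Λ)
    (hψ : ∀ u, IntRel V W φ (ψ u) u) :
    ∃ e : Λ.localized' ℚ ℤ⁰ (embL n) ≃ₗ[ℚ] Λ.localized' ℚ ℤ⁰ (embL n),
      (∀ z : Λ.localized' ℚ ℤ⁰ (embL n), RelQ V W φ z (e z)) ∧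
        IsIntegral ℤ (e.symm : Module.End ℚ (Λ.localized' ℚ ℤ⁰ (embL n))) := by
  set j := Λ.toLocalized' ℚ ℤ⁰ (embL n)
  set ψℚ := IsLocalizedModule.mapExtendScalars ℤ⁰ j j ℚ ψ
  have hψinj : Function.Injective ψ := fun a b hab =>
    Subtype.ext ((hψ a).right_unique (hab ▸ hψ b))
  have hψℚ : ∀ u, ψℚ (j u) = j (ψ u) := IsLocalizedModule.map_apply ℤ⁰ j j ψ
  set e := LinearEquiv.ofInjectiveEndo ψℚ (IsLocalizedModule.map_injective ℤ⁰ j j ψ hψinj)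
  refine ⟨e.symm, fun z => ?_, IsLocalizedModule.isIntegral_mapExtendScalars ℤ⁰ j ℚ ψ⟩
  obtain ⟨⟨u, s⟩, hsy⟩ := IsLocalizedModule.surj ℤ⁰ j (e.symm z)
  have hsz : (s : ℤ) • z = j (ψ u) := by
    calc (s : ℤ) • z = ψℚ ((s : ℤ) • e.symm z) := by
          rw [map_zsmul]; congr; exact (e.apply_symm_apply z).symm
      _ = j (ψ u) := by rw [← Submonoid.smul_def, hsy, hψℚ]
  exact RelQ.of_intRel (nonZeroDivisors.coe_ne_zero s) (hψ u)
    (congrArg Subtype.val hsz).symm (congrArg Subtype.val hsy).symm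

theorem intRel_symmOn {Λ : Submodule ℤ (Fin n → ℤ)} (hΛ : Λ ≤ W.toIntSubmodule) (u : Λ) :
    IntRel V W φ (symmOn φ Λ hΛ u) u :=
  ⟨(φ.symm _).2, by simp [symmOn]⟩

theorem exists_invariant_subspace_of_chain {w : ℕ → Fin n → ℤ}
    (hw : ∀ k, IntRel V W φ (w (k + 1)) (w k)) :
    ∃ (D : Submodule ℚ (Fin n → ℚ)) (e : D ≃ₗ[ℚ] D),
      (D : Set (Fin n → ℚ)) ⊆ DSet V W φ ∧ embQ n (w 0) ∈ D ∧
        (∀ z : D, RelQ V W φ z (e z)) ∧ IsIntegral ℤ (e.symm : Module.End ℚ D) := by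
  -- `w 0 = p • x` need not lie in `V`, so the lattice starts at `w 1`.
  set Λ := span ℤ (Set.range fun k => w (k + 1))
  have hΛ : Λ ≤ (V ⊓ W).toIntSubmodule :=
    span_le.2 <| by
      rintro _ ⟨k, rfl⟩
      exact ⟨(hw k).1, (hw (k + 1)).mem_right⟩
  have hΛW : Λ ≤ W.toIntSubmodule := hΛ.trans (by simp)
  have hψ : LinearMap.range (symmOn φ Λ hΛW) ≤ Λ :=
    LinearMap.range_le_of_forall_generator_mem _ <| by
      rintro _ ⟨k, rfl⟩
      rw [(intRel_symmOn hΛW _).left_unique (hw (k + 1))]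
      exact subset_span ⟨k + 1, rfl⟩
  obtain ⟨e, he, hint⟩ := exists_linearEquiv_relQ_of_intRel
    ((symmOn φ Λ hΛW).codRestrict Λ fun u => hψ ⟨u, rfl⟩) fun u => intRel_symmOn hΛW u
  have hw1 : embQ n (w 1) ∈ Λ.localized' ℚ ℤ⁰ (embL n) := by
    rw [localized'_eq_span]
    exact subset_span ⟨w 1, subset_span ⟨0, rfl⟩, rfl⟩
  have he1 : (e ⟨_, hw1⟩ : Fin n → ℚ) = embQ n (w 0) :=
    (he ⟨_, hw1⟩).right_unique (hw 0).relQ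
  exact ⟨_, e, subset_dSet_of_relQ (localized'_le_qSpan hΛ) e he, he1 ▸ (e _).2, he, hint⟩

theorem exists_chain_of_invariant_subspace {D : Submodule ℚ (Fin n → ℚ)}
    (hD : D ≤ qSpan n (V ⊓ W)) (e : D ≃ₗ[ℚ] D) (he : ∀ z : D, RelQ V W φ z (e z))
    (hint : IsIntegral ℤ (e.symm : Module.End ℚ D)) (z : D) :
    ∃ p : ℤ, 0 < p ∧ ∃ w : ℕ → Fin n → ℤ,
      embQ n (w 0) = p • (z : Fin n → ℚ) ∧ ∀ k, IntRel V W φ (w (k + 1)) (w k) := by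
  obtain ⟨N, hN, horbit⟩ := hint.exists_fg_orbit z
  obtain ⟨p, hp, hpN⟩ := (hN.map (D.subtype.restrictScalars ℤ)).exists_smul_mem
    (S := Submonoid.pos ℤ) (L := (V ⊓ W).toIntSubmodule.map (embL n)) <| by
      rintro _ ⟨y, -, rfl⟩
      obtain ⟨q, hq, u, hu, hqu⟩ := exists_pos_zsmul_mem_of_mem_qSpan (hD y.2)
      exact ⟨q, hq, u, hu, hqu⟩
  choose w hwVW hw using fun k => hpN _ (mem_map_of_mem (horbit k))
  refine ⟨p, hp, w, (hw 0).trans (by rw [pow_zero, one_smul]; rfl), fun k => ?_⟩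
  have hek : e ((e.symm : Module.End ℚ D) ^ (k + 1) • z) =
      (e.symm : Module.End ℚ D) ^ k • z := by
    rw [pow_succ', mul_smul]
    exact e.apply_symm_apply _
  exact (he _).intRel (hwVW (k + 1)).1 (hw (k + 1)) (hek ▸ hw k)

end

/-- Proposition 7.1(6): for `x ∈ M`, there is a positive integer `p` such that every
backward iterate `φ^{-k}` is defined at `p • x` (i.e. `p • x ∈ W_k` for all `k`) if and
only if there is a `ℚ`-subspace `D_x ⊆ D_φ` containing the image of `x`, invariant under
`φ̃` (with `φ̃ (D_x) = D_x`), such that the minimal polynomial of the restriction of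
`φ̃^{-1}` to `D_x` is a monic polynomial with integer coefficients. -/
theorem statement6 (n : ℕ) (V W : AddSubgroup (Fin n → ℤ)) (φ : V ≃+ W)
    (x : Fin n → ℤ) :
    (∃ p : ℤ, 0 < p ∧ ∀ k : ℕ, ∃ w, IntRelIter V W φ k w (p • x)) ↔
      (∃ (D : Submodule ℚ (Fin n → ℚ)) (e : D ≃ₗ[ℚ] D),
        (D : Set (Fin n → ℚ)) ⊆ DSet V W φ ∧ embQ n x ∈ D ∧
        (∀ z : D, RelQ V W φ (z : Fin n → ℚ) ((e z : D) : Fin n → ℚ)) ∧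
        ∃ P : Polynomial ℤ, P.Monic ∧
          P.map (Int.castRingHom ℚ) = minpoly ℚ (e.symm.toLinearMap : Module.End ℚ D)) := by
  simp only [forall_exists_intRelIter_iff, ← algebraMap_int_eq,
    ← isIntegral_iff_exists_monic_map_eq_minpoly]
  constructor
  · rintro ⟨p, hp, w, hw0, hw⟩
    obtain ⟨D, e, hDsub, hwD, he, hint⟩ := exists_invariant_subspace_of_chain hw
    refine ⟨D, e, hDsub, ?_, he, hint⟩
    rw [hw0, embQ_zsmul, ← Int.cast_smul_eq_zsmul ℚ] at hwD
    exact (D.smul_mem_iff (Int.cast_ne_zero.2 hp.ne')).1 hwD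
  · rintro ⟨D, e, hsub, hx, he, hint⟩
    obtain ⟨p, hp, w, hw0, hw⟩ :=
      exists_chain_of_invariant_subspace (hsub.trans dSet_subset_qSpan) e he hint ⟨_, hx⟩
    exact ⟨p, hp, w, embQ_injective (by rw [hw0, embQ_zsmul]), hw⟩
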